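/- In the Needham–Schroeder symmetric-key protocol context, the component Y violates the growth condition at step S_A^2 of the generalized role of agent A: for every context value v = ⌈Y⌉ that does not contain the intruder identity I, F'(Y, Y) ⋣ ⌈Y⌉ ⊓ F'(Y, {N_a.X.B.Y}_{k_as}); concretely, F'(Y, Y) = ⊥ = {I, A, B, S} while ⌈Y⌉ ⊓ F'(Y, {N_a.X.B.Y}_{k_as}) = v ∪ {A, S, B}, and {I, A, B, S} ⊄ v ∪ {A, S, B} since I ∉ v ∪ {A, S, B} (equation 2.9); hence step S_A^2 does not respect the little theorem of witness functions. -/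
import Mathlib


/- Agent identities: the intruder I and the honest agents A, B, S. -/
inductive Agent | I | A | B | S
deriving DecidableEq

/- Symmetric keys of the Needham–Schroeder symmetric-key protocol context. -/
inductive Key | kas | kbs
deriving DecidableEq

/- Variables of the protocol. -/
inductive Var | X | Y | Z | T | Q
deriving DecidableEq

/- Atomic names: agent identities, the nonce N_a, keys, and variables. -/
inductive AtomName
  | id (a : Agent)
  | nonceNa
  | key (k : Key)
  | var (x : Var)
deriving DecidableEq

/- Messages: atoms, concatenation m₁.m₂ and encryption {m}_k. -/
inductive Msg
  | atom (a : AtomName)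
  | concat (m₁ m₂ : Msg)
  | enc (m : Msg) (k : Key)
deriving DecidableEq

/- Security lattice (2^I, ⊆, ∩, ∪, I, ∅):
   `v ⊒ w` iff `v ⊆ w`, the minimum `⊓` is union, ⊥ = I (full set), ⊤ = ∅. -/
def secBot : Set Agent := Set.univ
def secTop : Set Agent := (∅ : Set Agent)
def secGe (v w : Set Agent) : Prop := v ⊆ w
def secMin (v w : Set Agent) : Set Agent := v ∪ w

/- All keys are symmetric: each key is its own reverse. -/
def keyInv : Key → Key := fun k => k

/- ⌈k⌉: the set of agents holding the key k:
   ⌈k_as⌉ = {A, S}, ⌈k_bs⌉ = {B, S}. -/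
def keyLevel : Key → Set Agent
  | .kas => {Agent.A, Agent.S}
  | .kbs => {Agent.B, Agent.S}

/- Context value ⌈α⌉ of atomic names:
   ⌈A⌉ = ⌈B⌉ = ⌈S⌉ = ⊥, ⌈N_a⌉ = ⊥, keys have their key level;
   an unknown component (variable) is treated as possibly public (⊥)
   for the encryption test of F. -/
def ctxVal : AtomName → Set Agent
  | .id _ => secBot
  | .nonceNa => secBot
  | .key k => keyLevel k
  | .var _ => secBot

/- α occurs among the atoms of m. -/
def occurs (α : AtomName) : Msg → Bool
  | .atom β => β = α
  | .concat m₁ m₂ => occurs α m₁ || occurs α m₂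
  | .enc m _ => occurs α m

/- ID(m): the set of agent identities occurring in m. -/
def ids : Msg → Set Agent
  | .atom (.id a) => {a}
  | .atom _ => ∅
  | .concat m₁ m₂ => ids m₁ ∪ ids m₂
  | .enc m _ => ids m

/- The reliable function F:
   F(α,{α}) = ⊥; F(α,M) = ⊤ if α ∉ A(M); F(α,m₁.m₂) = F(α,m₁) ⊓ F(α,m₂);
   F(α,{m}_k) = F(α,m) if ⌈k⁻¹⌉ ⋣ ⌈α⌉;
   F(α,{m}_k) = ⌈k⁻¹⌉ ∪ ID(m) if ⌈k⁻¹⌉ ⊒ ⌈α⌉. -/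
open Classical in
noncomputable def F (α : AtomName) : Msg → Set Agent
  | .atom β => if β = α then secBot else secTop
  | .concat m₁ m₂ => F α m₁ ∪ F α m₂
  | .enc m k =>
      if occurs α m then
        if keyLevel (keyInv k) ⊆ ctxVal α then keyLevel (keyInv k) ∪ ids m
        else F α m
      else secTop

def isVar : AtomName → Bool
  | .var _ => true
  | _ => false

/- Derivation: delete all variables occurring in m (other than the
   evaluated component α itself). -/
def derivToward (α : AtomName) : Msg → Option Msg
  | .atom β => if isVar β ∧ β ≠ α then none else some (.atom β)
  | .concat m₁ m₂ =>
      match derivToward α m₁, derivToward α m₂ with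
      | some a, some b => some (.concat a b)
      | some a, none => some a
      | none, some b => some b
      | none, none => none
  | .enc m k =>
      match derivToward α m with
      | some m' => some (.enc m' k)
      | none => none

/- The witness (derivative) function F': first delete the variables,
   then apply F (if everything is deleted, α does not occur, so ⊤). -/
noncomputable def F' (α : AtomName) (m : Msg) : Set Agent :=
  match derivToward α m with
  | some m' => F α m'
  | none => secTop

/- F' on a finite set (list) of received messages:
   F'(α, ∅) = ⊤ and F'(α, M₁ ∪ M₂) = F'(α, M₁) ⊓ F'(α, M₂). -/
noncomputable def F'set (α : AtomName) (M : List Msg) : Set Agent :=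
  (M.map (F' α)).foldr (· ∪ ·) secTop

/- Shorthand messages of the NS protocol analysis. -/
def mA : Msg := .atom (.id .A)
def mB : Msg := .atom (.id .B)
def mNa : Msg := .atom .nonceNa
def mX : Msg := .atom (.var .X)
def mY : Msg := .atom (.var .Y)

/- Sent message of step S_A^1 : A.B.N_a. -/
def rPlusSA1 : Msg := .concat (.concat mA mB) mNa

/- Received message of step S_A^2 : {N_a.X.B.Y}_{k_as}. -/
def rMinusSA2 : Msg := .enc (.concat (.concat (.concat mNa mX) mB) mY) .kas

/- Equation 2.9: Y violates the growth condition at step S_A^2: for every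
   context value v = ⌈Y⌉ not containing the intruder identity I,
   F'(Y, Y) ⋣ ⌈Y⌉ ⊓ F'(Y, {N_a.X.B.Y}_{k_as}); concretely F'(Y, Y) = ⊥ = {I,A,B,S},
   ⌈Y⌉ ⊓ F'(Y, R⁻) = v ∪ {A,S,B}, and {I,A,B,S} ⊄ v ∪ {A,S,B} since
   I ∉ v ∪ {A,S,B}. Hence step S_A^2 does not respect the little theorem
   of witness functions. -/
theorem stmt13 : ∀ v : Set Agent, Agent.I ∉ v →
    F' (.var .Y) mY = ({Agent.I, Agent.A, Agent.B, Agent.S} : Set Agent) ∧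
    secMin v (F' (.var .Y) rMinusSA2) = v ∪ {Agent.A, Agent.S, Agent.B} ∧
    Agent.I ∉ v ∪ ({Agent.A, Agent.S, Agent.B} : Set Agent) ∧
    ¬ secGe (F' (.var .Y) mY) (secMin v (F' (.var .Y) rMinusSA2)) := by
  have hR : F' (.var .Y) rMinusSA2 = ({Agent.A, Agent.S, Agent.B} : Set Agent) := by
    have hd : derivToward (AtomName.var Var.Y) rMinusSA2 =
        some ((((Msg.atom .nonceNa).concat (.atom (.id .B))).concat (.atom (.var .Y))).enc .kas) := by
      decide
    rw [F', hd]
    show F (AtomName.var Var.Y) ((((Msg.atom .nonceNa).concat (.atom (.id .B))).concat (.atom (.var .Y))).enc .kas) = _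
    rw [F.eq_def]
    split
    · simp_all
    · simp_all
    · rename_i m k heq
      injection heq with h1 h2
      subst h2; subst h1
      rw [if_pos (by decide), if_pos (by simp [ctxVal, secBot])]
      simp [keyInv, keyLevel, ids]
      ext a; cases a <;> simp
  intro v hv
  have hYY : F' (.var .Y) mY = Set.univ := by
    simp [F', derivToward, mY, isVar, F, secBot]
  have huniv : (Set.univ : Set Agent) = {Agent.I, Agent.A, Agent.B, Agent.S} := by
    ext a; cases a <;> simp
  refine ⟨hYY.trans huniv, ?_, ?_, ?_⟩
  · rw [hR]; rfl
  · intro h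
    rcases Set.mem_union .. |>.1 h with h | h
    · exact hv h
    · simp at h
  · rw [hYY, hR]
    intro h
    have hm : Agent.I ∈ secMin v {Agent.A, Agent.S, Agent.B} := h (Set.mem_univ Agent.I)
    rcases Set.mem_union .. |>.1 hm with h' | h'
    · exact hv h'
    · simp at h'
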